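/- Let A be a finite-dimensional k-solvable n-Lie superalgebra (2 ≤ k ≤ n). Then the Jacobson radical J(A), defined as the intersection of all maximal ideals of A, equals the derived subalgebra A^{(1)} = [A,...,A]. -/
import Mathlib


/-- The sign `(-1)^t` for a parity `t ∈ ℤ/2`, as an element of the field `F`. -/
def superSgn (F : Type*) [Field F] (t : ZMod 2) : F := if t = 0 then 1 else -1

/-- An `n`-Lie superalgebra of parity `α` over a field `F`: a `ℤ/2`-graded vector space `A`
with an `n`-linear bracket which is homogeneous of degree `α`, skew-supersymmetric, and
satisfies the super Filippov–Jacobi identity (every left multiplication operator is a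
superderivation). -/
structure NLieSuper (F : Type*) (A : Type*) [Field F] [AddCommGroup A] [Module F A]
    (n : ℕ) (α : ZMod 2) where
  bracket : MultilinearMap F (fun _ : Fin n => A) A
  grading : ZMod 2 → Submodule F A
  internal : DirectSum.IsInternal grading
  bracket_grade : ∀ (x : Fin n → A) (g : Fin n → ZMod 2),
    (∀ i, x i ∈ grading (g i)) → bracket x ∈ grading (α + ∑ i, g i)
  skew : ∀ (x : Fin n → A) (g : Fin n → ZMod 2), (∀ i, x i ∈ grading (g i)) →
    ∀ i j : Fin n, (i : ℕ) + 1 = (j : ℕ) →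
      bracket (x ∘ Equiv.swap i j) = - (superSgn F (g i * g j)) • bracket x
  jacobi : ∀ (a : Fin n → A) (ga : Fin n → ZMod 2), (∀ l, a l ∈ grading (ga l)) →
    ∀ (b : Fin n → A) (gb : Fin n → ZMod 2), (∀ l, b l ∈ grading (gb l)) →
    ∀ i : Fin n,
      bracket (Function.update a i (bracket b)) =
      ∑ j : Fin n,
        (superSgn F ((∑ l ∈ Finset.univ.erase i, ga l) *
            (α + ∑ l ∈ Finset.univ.filter (fun l => l < j), gb l))) •
          bracket (Function.update b j (bracket (Function.update a i (b j))))

namespace NLieSuper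

variable {F A : Type*} [Field F] [AddCommGroup A] [Module F A] {n : ℕ} {α : ZMod 2}

/-- A graded subspace (`vector superspace`): `S = (S ⊓ A₀) ⊕ (S ⊓ A₁)`. -/
def IsGraded (L : NLieSuper F A n α) (S : Submodule F A) : Prop :=
  S ≤ (S ⊓ L.grading 0) ⊔ (S ⊓ L.grading 1)

/-- A subalgebra: a graded subspace closed under the bracket. -/
def IsSubalgebra (L : NLieSuper F A n α) (S : Submodule F A) : Prop :=
  L.IsGraded S ∧ ∀ x : Fin n → A, (∀ i, x i ∈ S) → L.bracket x ∈ S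

/-- An ideal: a graded subspace `I` with `[A,…,A,I] ⊆ I`. -/
def IsIdeal (L : NLieSuper F A n α) (S : Submodule F A) : Prop :=
  L.IsGraded S ∧ ∀ x : Fin n → A, (∃ i, x i ∈ S) → L.bracket x ∈ S

/-- `[A,…,A,M]`: the span of all brackets with at least one entry in `M`. -/
def amul (L : NLieSuper F A n α) (M : Submodule F A) : Submodule F A :=
  Submodule.span F {z | ∃ x : Fin n → A, (∃ i, x i ∈ M) ∧ z = L.bracket x}

/-- The lower central series: `lcs 0 = A¹ = A`, `lcs s = A^{s+1} = [A,…,A,A^s]`. -/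
def lcs (L : NLieSuper F A n α) : ℕ → Submodule F A
  | 0 => ⊤
  | s + 1 => L.amul (L.lcs s)

/-- `A` is nilpotent if the lower central series reaches `0`. -/
def IsNilpotentAlg (L : NLieSuper F A n α) : Prop := ∃ v, L.lcs v = ⊥

/-- The derived subalgebra `A² = [A,…,A]`. -/
def derived (L : NLieSuper F A n α) : Submodule F A := L.lcs 1

/-- Maximal subalgebras: proper subalgebras maximal among proper subalgebras. -/
def IsMaximalSubalgebra (L : NLieSuper F A n α) (S : Submodule F A) : Prop :=
  L.IsSubalgebra S ∧ S ≠ ⊤ ∧ ∀ T, L.IsSubalgebra T → S < T → T = ⊤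

/-- The Frattini subalgebra: the intersection of all maximal subalgebras. -/
def frattini (L : NLieSuper F A n α) : Submodule F A :=
  sInf {S | L.IsMaximalSubalgebra S}

end NLieSuper

namespace NLieSuper

variable {F A : Type*} [Field F] [AddCommGroup A] [Module F A] {n : ℕ} {α : ZMod 2}

/-- Maximal ideals: proper ideals maximal among proper ideals. -/
def IsMaximalIdeal (L : NLieSuper F A n α) (S : Submodule F A) : Prop :=
  L.IsIdeal S ∧ S ≠ ⊤ ∧ ∀ T, L.IsIdeal T → S < T → T = ⊤

/-- The Jacobson radical: the intersection of all maximal ideals. -/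
def jacobson (L : NLieSuper F A n α) : Submodule F A :=
  sInf {S | L.IsMaximalIdeal S}

/-- The `k`-derived series `A^{(0)} = A`,
`A^{(s+1)} = [A^{(s)},…,A^{(s)} (k times), A,…,A (n-k times)]`. -/
def kDerived (L : NLieSuper F A n α) (k : ℕ) : ℕ → Submodule F A
  | 0 => ⊤
  | s + 1 => Submodule.span F
      {z | ∃ x : Fin n → A,
        (∃ t : Finset (Fin n), t.card = k ∧ ∀ i ∈ t, x i ∈ L.kDerived k s) ∧ z = L.bracket x}

/-- `A` is `k`-solvable if the `k`-derived series reaches `0`. -/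
def IsKSolvable (L : NLieSuper F A n α) (k : ℕ) : Prop := ∃ r, L.kDerived k r = ⊥

end NLieSuper

namespace NLieSuper

variable {F A : Type*} [Field F] [AddCommGroup A] [Module F A] {n : ℕ} {α : ZMod 2}

lemma zmod2_cases : ∀ t : ZMod 2, t = 0 ∨ t = 1 := by decide

lemma fin2_cases : ∀ j : Fin 2, j = 0 ∨ j = 1 := by decide

lemma grading_sup (L : NLieSuper F A n α) : L.grading 0 ⊔ L.grading 1 = ⊤ := by
  refine le_antisymm le_top ?_
  rw [← L.internal.submodule_iSup_eq_top]
  refine iSup_le fun t => ?_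
  rcases zmod2_cases t with h | h <;> rw [h]
  · exact le_sup_left
  · exact le_sup_right

lemma exists_decomp (L : NLieSuper F A n α) (a : A) :
    ∃ a0 ∈ L.grading 0, ∃ a1 ∈ L.grading 1, a = a0 + a1 := by
  have : a ∈ L.grading 0 ⊔ L.grading 1 := by rw [L.grading_sup]; trivial
  rcases Submodule.mem_sup.mp this with ⟨a0, h0, a1, h1, h⟩
  exact ⟨a0, h0, a1, h1, h.symm⟩

lemma grading_disjoint (L : NLieSuper F A n α) {s t : ZMod 2} (h : s ≠ t) :
    Disjoint (L.grading s) (L.grading t) :=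
  L.internal.submodule_iSupIndep.pairwiseDisjoint h

lemma derived_eq (L : NLieSuper F A n α) : L.derived = L.amul ⊤ := rfl

lemma bracket_mem_derived (L : NLieSuper F A n α) (hn : 2 ≤ n) (x : Fin n → A) :
    L.bracket x ∈ L.derived := by
  rw [derived_eq]
  exact Submodule.subset_span ⟨x, ⟨⟨0, by omega⟩, Submodule.mem_top⟩, rfl⟩

lemma amul_le (L : NLieSuper F A n α) {M T : Submodule F A}
    (h : ∀ x : Fin n → A, (∃ i, x i ∈ M) → L.bracket x ∈ T) : L.amul M ≤ T := by
  apply Submodule.span_le.mpr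
  rintro z ⟨x, hx, rfl⟩
  exact h x hx

lemma kDerived_succ_eq (L : NLieSuper F A n α) (k s : ℕ) :
    L.kDerived k (s + 1) = Submodule.span F
      {z | ∃ x : Fin n → A,
        (∃ t : Finset (Fin n), t.card = k ∧ ∀ i ∈ t, x i ∈ L.kDerived k s) ∧ z = L.bracket x} :=
  rfl

lemma bracket_mem_kDerived_succ (L : NLieSuper F A n α) {k s : ℕ} {x : Fin n → A}
    (h : ∃ t : Finset (Fin n), t.card = k ∧ ∀ i ∈ t, x i ∈ L.kDerived k s) :
    L.bracket x ∈ L.kDerived k (s + 1) := by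
  rw [kDerived_succ_eq]
  exact Submodule.subset_span ⟨x, h, rfl⟩

lemma bracket_sum_decomp (L : NLieSuper F A n α) (x : Fin n → A) (c : Fin n → Fin 2 → A)
    (hc : ∀ i, x i = c i 0 + c i 1) :
    L.bracket x = ∑ r : Fin n → Fin 2, L.bracket (fun i => c i (r i)) := by
  have hx : x = fun i => ∑ j : Fin 2, c i j := by
    funext i; rw [Fin.sum_univ_two]; exact hc i
  rw [hx, L.bracket.map_sum]

lemma derived_graded (L : NLieSuper F A n α) (hn : 2 ≤ n) : L.IsGraded L.derived := by
  show L.derived ≤ _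
  rw [derived_eq]
  apply L.amul_le
  intro x _
  have := fun i => L.exists_decomp (x i)
  choose c0 h0 c1 h1 hx using this
  rw [L.bracket_sum_decomp x (fun i j => if j = 0 then c0 i else c1 i)
    (fun i => by simpa using hx i)]
  apply Submodule.sum_mem
  intro r _
  set g : Fin n → ZMod 2 := fun i => if r i = 0 then 0 else 1 with hg
  have hmem : ∀ i, (if r i = 0 then c0 i else c1 i) ∈ L.grading (g i) := by
    intro i
    rcases fin2_cases (r i) with h | h <;> simp [hg, h, h0 i, h1 i]
  have hgr := L.bracket_grade _ g hmem
  have hder := L.bracket_mem_derived hn (fun i => if r i = 0 then c0 i else c1 i)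
  rcases zmod2_cases (α + ∑ i, g i) with h | h <;> rw [h] at hgr
  · exact Submodule.mem_sup_left ⟨hder, hgr⟩
  · exact Submodule.mem_sup_right ⟨hder, hgr⟩

lemma sup_graded (L : NLieSuper F A n α) {S T : Submodule F A}
    (hS : L.IsGraded S) (hT : L.IsGraded T) : L.IsGraded (S ⊔ T) := by
  intro a ha
  rcases Submodule.mem_sup.mp ha with ⟨s, hs, t, ht, rfl⟩
  have mono : ∀ U : Submodule F A, U ≤ S ⊔ T →
      (U ⊓ L.grading 0) ⊔ (U ⊓ L.grading 1) ≤
        ((S ⊔ T) ⊓ L.grading 0) ⊔ ((S ⊔ T) ⊓ L.grading 1) := fun U hU =>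
    sup_le_sup (inf_le_inf_right _ hU) (inf_le_inf_right _ hU)
  exact add_mem (mono S le_sup_left (hS hs)) (mono T le_sup_right (hT ht))

lemma derived_le_of_maximal (L : NLieSuper F A n α) (hn : 2 ≤ n) {k : ℕ} (hkn : k ≤ n)
    (hsol : L.IsKSolvable k) {M : Submodule F A} (hM : L.IsMaximalIdeal M) :
    L.derived ≤ M := by
  by_contra hnd
  have hN : L.IsIdeal (L.derived ⊔ M) :=
    ⟨L.sup_graded (L.derived_graded hn) hM.1.1,
     fun x _ => Submodule.mem_sup_left (L.bracket_mem_derived hn x)⟩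
  have hlt : M < L.derived ⊔ M := right_lt_sup.mpr hnd
  have htop : L.derived ⊔ M = ⊤ := hM.2.2 _ hN hlt
  have hind : ∀ s, L.kDerived k s ⊔ M = ⊤ := by
    intro s
    induction s with
    | zero => exact top_sup_eq M
    | succ s ih =>
      refine le_antisymm le_top ?_
      rw [← htop]
      refine sup_le ?_ le_sup_right
      rw [derived_eq]
      apply L.amul_le
      intro x _
      have hxi : ∀ i, ∃ y ∈ L.kDerived k s, ∃ m ∈ M, x i = y + m := by
        intro i
        have : x i ∈ L.kDerived k s ⊔ M := by rw [ih]; trivial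
        rcases Submodule.mem_sup.mp this with ⟨y, hy, m, hm, h⟩
        exact ⟨y, hy, m, hm, h.symm⟩
      choose y hy m hm hx using hxi
      rw [L.bracket_sum_decomp x (fun i j => if j = 0 then y i else m i)
        (fun i => by simpa using hx i)]
      apply Submodule.sum_mem
      intro r _
      by_cases hr : ∀ i, r i = 0
      · apply Submodule.mem_sup_left
        apply L.bracket_mem_kDerived_succ
        obtain ⟨t, _, hts⟩ :=
          Finset.exists_subset_card_eq (s := (Finset.univ : Finset (Fin n))) (n := k)
            (by simpa using hkn)
        exact ⟨t, hts, fun i _ => by simp [hr i, hy i]⟩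
      · push_neg at hr
        obtain ⟨i, hi⟩ := hr
        have h1 : r i = 1 := (fin2_cases (r i)).resolve_left hi
        apply Submodule.mem_sup_right
        exact hM.1.2 _ ⟨i, by simp [h1, hm i]⟩
  obtain ⟨rr, hrr⟩ := hsol
  have := hind rr
  rw [hrr, bot_sup_eq] at this
  exact hM.2.1 this

end NLieSuper
namespace NLieSuper

variable {F A : Type*} [Field F] [AddCommGroup A] [Module F A] {n : ℕ} {α : ZMod 2}

lemma exists_maximal_not_mem (L : NLieSuper F A n α) (hn : 2 ≤ n) {t : ZMod 2} {v : A}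
    (hvt : v ∈ L.grading t) (hvd : v ∉ L.derived) :
    ∃ M : Submodule F A, L.IsMaximalIdeal M ∧ v ∉ M ∧ L.grading (t + 1) ≤ M := by
  have hvB : v ∉ L.derived ⊔ L.grading (t + 1) := by
    intro h
    rcases Submodule.mem_sup.mp h with ⟨d, hd, w, hw, hdw⟩
    have hd2 := L.derived_graded hn hd
    rcases Submodule.mem_sup.mp hd2 with ⟨d0, hd0, d1, hd1, hdd⟩
    rcases zmod2_cases t with rfl | rfl
    · have hne : (1 : ZMod 2) ≠ 0 := by decide
      have h1 : v - d0 ∈ L.grading 0 := sub_mem hvt hd0.2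
      have h2 : v - d0 = d1 + w := by rw [← hdw, ← hdd]; abel
      have hw' : w ∈ L.grading 1 := by rwa [show (0 : ZMod 2) + 1 = 1 by decide] at hw
      have h3 : v - d0 ∈ L.grading 1 := h2 ▸ add_mem hd1.2 hw'
      have h0 : v - d0 = 0 :=
        (Submodule.disjoint_def.mp (L.grading_disjoint hne) _ h3 h1)
      have : v = d0 := by rw [sub_eq_zero] at h0; exact h0
      exact hvd (this ▸ hd0.1)
    · have hne : (0 : ZMod 2) ≠ 1 := by decide
      have h1 : v - d1 ∈ L.grading 1 := sub_mem hvt hd1.2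
      have h2 : v - d1 = d0 + w := by rw [← hdw, ← hdd]; abel
      have hw' : w ∈ L.grading 0 := by rwa [show (1 : ZMod 2) + 1 = 0 by decide] at hw
      have h3 : v - d1 ∈ L.grading 0 := h2 ▸ add_mem hd0.2 hw'
      have h0 : v - d1 = 0 :=
        (Submodule.disjoint_def.mp (L.grading_disjoint hne) _ h3 h1)
      have : v = d1 := by rw [sub_eq_zero] at h0; exact h0
      exact hvd (this ▸ hd1.1)
  set B := L.derived ⊔ L.grading (t + 1) with hBdef
  have hq : B.mkQ v ≠ 0 := by
    rw [Submodule.mkQ_apply, ne_eq, Submodule.Quotient.mk_eq_zero]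
    exact hvB
  obtain ⟨φ, hφ⟩ : ∃ φ : Module.Dual F (A ⧸ B), φ (B.mkQ v) ≠ 0 := by
    by_contra h
    push_neg at h
    exact hq ((Module.forall_dual_apply_eq_zero_iff F _).mp h)
  set g : A →ₗ[F] F := φ ∘ₗ B.mkQ with hgdef
  have hBM : B ≤ LinearMap.ker g := by
    intro x hx
    have : B.mkQ x = 0 := by rw [Submodule.mkQ_apply, Submodule.Quotient.mk_eq_zero]; exact hx
    simp [hgdef, LinearMap.mem_ker, this]
  set M := LinearMap.ker g with hMdef
  have hvM : v ∉ M := by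
    simp only [hMdef, LinearMap.mem_ker]
    exact hφ
  have hDM : L.derived ≤ M := le_trans le_sup_left hBM
  have hWM : L.grading (t + 1) ≤ M := le_trans le_sup_right hBM
  refine ⟨M, ⟨⟨?_, fun x _ => hDM (L.bracket_mem_derived hn x)⟩,
    fun h => hvM (h ▸ Submodule.mem_top), ?_⟩, hvM, hWM⟩
  · -- graded
    intro a ha
    obtain ⟨a0, h0, a1, h1, rfl⟩ := L.exists_decomp a
    rcases zmod2_cases t with rfl | rfl
    · have ha1 : a1 ∈ M := hWM (by rwa [show (0 : ZMod 2) + 1 = 1 by decide])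
      have ha0 : a0 ∈ M := by
        have := sub_mem ha ha1
        rwa [add_sub_cancel_right] at this
      exact Submodule.mem_sup.mpr ⟨a0, ⟨ha0, h0⟩, a1, ⟨ha1, h1⟩, rfl⟩
    · have ha0 : a0 ∈ M := hWM (by rwa [show (1 : ZMod 2) + 1 = 0 by decide])
      have ha1 : a1 ∈ M := by
        have := sub_mem ha ha0
        rwa [add_sub_cancel_left] at this
      exact Submodule.mem_sup.mpr ⟨a0, ⟨ha0, h0⟩, a1, ⟨ha1, h1⟩, rfl⟩
  · -- maximal
    intro T _ hMT
    obtain ⟨u, huT, huM⟩ := SetLike.exists_of_lt hMT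
    have hgu : g u ≠ 0 := by
      simpa only [hMdef, LinearMap.mem_ker] using huM
    rw [eq_top_iff]
    intro a _
    have hker : a - (g a / g u) • u ∈ M := by
      simp [hMdef, LinearMap.mem_ker, map_sub, map_smul, smul_eq_mul,
        div_mul_cancel₀ _ hgu]
    have := add_mem (hMT.le hker) (Submodule.smul_mem T (g a / g u) huT)
    simpa using this

lemma jacobson_le_derived (L : NLieSuper F A n α) (hn : 2 ≤ n) :
    L.jacobson ≤ L.derived := by
  intro v hv
  by_contra hvd
  obtain ⟨v0, h0, v1, h1, rfl⟩ := L.exists_decomp v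
  have hor : v0 ∉ L.derived ∨ v1 ∉ L.derived := by
    by_contra h
    push_neg at h
    exact hvd (add_mem h.1 h.2)
  rcases hor with h | h
  · obtain ⟨M, hM, hvM, hWM⟩ := L.exists_maximal_not_mem hn h0 h
    have hvM2 : v0 + v1 ∈ M := sInf_le (show M ∈ {S | L.IsMaximalIdeal S} from hM) hv
    have hv1 : v1 ∈ M := hWM (by rwa [show (0 : ZMod 2) + 1 = 1 by decide])
    have : v0 ∈ M := by
      have := sub_mem hvM2 hv1
      rwa [add_sub_cancel_right] at this
    exact hvM this
  · obtain ⟨M, hM, hvM, hWM⟩ := L.exists_maximal_not_mem hn h1 h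
    have hvM2 : v0 + v1 ∈ M := sInf_le (show M ∈ {S | L.IsMaximalIdeal S} from hM) hv
    have hv0 : v0 ∈ M := hWM (by rwa [show (1 : ZMod 2) + 1 = 0 by decide])
    have : v1 ∈ M := by
      have := sub_mem hvM2 hv0
      rwa [add_sub_cancel_left] at this
    exact hvM this

end NLieSuper
/-- For a finite-dimensional `k`-solvable `n`-Lie superalgebra (`2 ≤ k ≤ n`), the Jacobson
radical equals the derived subalgebra `A^{(1)} = [A,…,A]`. -/
theorem jacobson_eq_derived_of_kSolvable {F A : Type*} [Field F] [AddCommGroup A]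
    [Module F A] [FiniteDimensional F A] {n : ℕ} (hn : 2 ≤ n) {α : ZMod 2}
    (L : NLieSuper F A n α) (k : ℕ) (hk2 : 2 ≤ k) (hkn : k ≤ n)
    (hsol : L.IsKSolvable k) : L.jacobson = L.derived := by
  exact le_antisymm (L.jacobson_le_derived hn)
    (le_sInf fun M hM => L.derived_le_of_maximal hn hkn hsol hM)
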